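/- arXiv:2103.16275 — 3 statements merged into one kernel-verified Lean document; each statement's English description precedes it below -/
import Mathlib

section
/- For every θ ∈ ℝ there exists a linear isometric equivalence B of ℓ²(ℕ×ℕ, ℂ) onto itself (a beam splitter with transmissivity cos²θ) such that B(coh α ⊠ coh β) = coh(α·cos θ + i·β·sin θ) ⊠ coh(β·cos θ + i·α·sin θ) for all α, β ∈ ℂ. -/
open scoped ComplexConjugate ENNReal

/-- The components of the coherent state `|α⟩`: `exp(−|α|²/2)·αⁿ/√(n!)`. -/
noncomputable def cohFun (α : ℂ) : ℕ → ℂ := fun n =>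
  (Real.exp (-‖α‖ ^ 2 / 2) / Real.sqrt (Nat.factorial n) : ℝ) * α ^ n

lemma cohFun_memℓp (α : ℂ) : Memℓp (cohFun α) 2 := by
  apply memℓp_gen
  have h : Summable (fun n : ℕ =>
      Real.exp (-‖α‖ ^ 2 / 2) ^ 2 * ((‖α‖ ^ 2) ^ n / (Nat.factorial n))) :=
    (Real.summable_pow_div_factorial (‖α‖ ^ 2)).mul_left _
  refine h.congr fun n => ?_
  have h2 : ((2 : ℝ≥0∞).toReal) = (2 : ℝ) := by norm_num
  rw [h2, Real.rpow_two]
  have hn : ‖cohFun α n‖ = Real.exp (-‖α‖ ^ 2 / 2) / Real.sqrt (Nat.factorial n) * ‖α‖ ^ n := by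
    simp only [cohFun, norm_mul, norm_pow, Complex.norm_real, Real.norm_eq_abs]
    rw [abs_of_pos (by positivity)]
  rw [hn, mul_pow, div_pow, Real.sq_sqrt (by positivity), pow_right_comm]
  ring

/-- The coherent state `|α⟩` as an element of `ℓ²(ℕ, ℂ)`. -/
noncomputable def coh (α : ℂ) : lp (fun _ : ℕ => ℂ) 2 := ⟨cohFun α, cohFun_memℓp α⟩

/-- The product state `ψ ⊠ χ` in the two-mode space `ℓ²(ℕ×ℕ, ℂ)`,
with components `(ψ ⊠ χ)(n, m) = ψ n · χ m`. -/
noncomputable def tmul (ψ χ : lp (fun _ : ℕ => ℂ) 2) : lp (fun _ : ℕ × ℕ => ℂ) 2 :=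
  ⟨fun q => ψ q.1 * χ q.2, by
    apply memℓp_gen
    have hψ := (lp.memℓp ψ).summable (p := 2) (by norm_num)
    have hχ := (lp.memℓp χ).summable (p := 2) (by norm_num)
    refine (hψ.mul_of_nonneg hχ (fun n => Real.rpow_nonneg (norm_nonneg _) _)
      (fun n => Real.rpow_nonneg (norm_nonneg _) _)).congr fun q => ?_
    rw [norm_mul, Real.mul_rpow (norm_nonneg _) (norm_nonneg _)]⟩


/-!
The Gram matrix of two-mode coherent states,
`⟪|α, β⟩, |α', β'⟩⟫ = exp (⟪p, p'⟫ - (‖p‖² + ‖p'‖²) / 2)` with `p = (α, β)`, `p' = (α', β')`,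
only depends on the inner product of `ℂ²`, so it is invariant under every unitary `U` of `ℂ²`,
such as the beam splitter. Coherent states are total in `ℓ²(ℕ)`: a vector orthogonal to all of
them has an identically vanishing entire generating function. Hence their products are total in
`ℓ²(ℕ × ℕ)`, and `|p⟩ ↦ |U p⟩` extends to a unitary because it preserves inner products.
-/

open scoped InnerProductSpace

section InnerEq

variable {𝕜 H H' ι : Type*} [RCLike 𝕜] [NormedAddCommGroup H] [InnerProductSpace 𝕜 H]
  [NormedAddCommGroup H'] [InnerProductSpace 𝕜 H']

theorem denseRange_linearCombination {v : ι → H}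
    (hv : (Submodule.span 𝕜 (Set.range v)).topologicalClosure = ⊤) :
    DenseRange (Finsupp.linearCombination 𝕜 v) := by
  rwa [DenseRange, ← LinearMap.coe_range, Finsupp.range_linearCombination,
    Submodule.dense_iff_topologicalClosure_eq_top]

theorem norm_linearCombination_eq_of_inner_eq {v : ι → H} {w : ι → H'}
    (hvw : ∀ i j, ⟪v i, v j⟫_𝕜 = ⟪w i, w j⟫_𝕜) (c : ι →₀ 𝕜) :
    ‖Finsupp.linearCombination 𝕜 w c‖ = ‖Finsupp.linearCombination 𝕜 v c‖ := by
  simp only [@norm_eq_sqrt_re_inner 𝕜, Finsupp.linearCombination_apply, Finsupp.sum,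
    sum_inner, inner_sum, inner_smul_left, inner_smul_right, hvw]

theorem exists_linearIsometryEquiv_of_inner_eq [CompleteSpace H] [CompleteSpace H']
    {v : ι → H} {w : ι → H'} (hvw : ∀ i j, ⟪v i, v j⟫_𝕜 = ⟪w i, w j⟫_𝕜)
    (hv : (Submodule.span 𝕜 (Set.range v)).topologicalClosure = ⊤)
    (hw : (Submodule.span 𝕜 (Set.range w)).topologicalClosure = ⊤) :
    ∃ B : H ≃ₗᵢ[𝕜] H', ∀ i, B (v i) = w i := by
  let e := LinearEquiv.refl 𝕜 (ι →₀ 𝕜)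
  have hB := e.extendOfIsometry_eq _ _ (denseRange_linearCombination hv)
    (denseRange_linearCombination hw) (norm_linearCombination_eq_of_inner_eq hvw)
  exact ⟨_, fun i => by simpa [e] using hB (Finsupp.single i 1)⟩

end InnerEq

theorem eq_zero_of_tsum_mul_pow_eq_zero {𝕜 : Type*} [NontriviallyNormedField 𝕜]
    [CompleteSpace 𝕜] {c : ℕ → 𝕜} {C : ℝ} (hC : ∀ n, ‖c n‖ ≤ C)
    (hc : ∀ z, ∑' n, c n * z ^ n = 0) : c = 0 := by
  set p := FormalMultilinearSeries.ofScalars 𝕜 c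
  have hp : (1 : ℝ≥0∞) ≤ p.radius := mod_cast p.le_radius_of_bound C fun n => by
    simpa [p, FormalMultilinearSeries.ofScalars_norm] using hC n
  have hsum : p.sum = 0 := funext fun z => by
    simpa [p, FormalMultilinearSeries.sum, FormalMultilinearSeries.ofScalars_apply_eq, mul_comm]
      using hc z
  have hp₀ := (p.hasFPowerSeriesOnBall (zero_lt_one.trans_le hp)).hasFPowerSeriesAt
  rw [hsum] at hp₀
  exact (FormalMultilinearSeries.ofScalars_series_eq_zero 𝕜).1 hp₀.eq_zero

theorem coh_apply (α : ℂ) (n : ℕ) : coh α n = cohFun α n := rfl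

theorem inner_coh_left (α : ℂ) (x : lp (fun _ : ℕ => ℂ) 2) :
    ⟪coh α, x⟫_ℂ = Real.exp (-‖α‖ ^ 2 / 2) * ∑' n, x n / Real.sqrt n.factorial * conj α ^ n := by
  rw [lp.inner_eq_tsum, ← tsum_mul_left]
  congr 1 with n
  simp only [RCLike.inner_apply, coh_apply, cohFun, map_mul, map_pow, Complex.conj_ofReal]
  push_cast
  ring

theorem inner_coh (α β : ℂ) :
    ⟪coh α, coh β⟫_ℂ = Complex.exp (conj α * β - (conj α * α + conj β * β) / 2) := by
  have hsq (n : ℕ) : (Real.sqrt n.factorial : ℂ) * Real.sqrt n.factorial = n.factorial := by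
    exact_mod_cast Real.mul_self_sqrt (Nat.cast_nonneg _)
  have hseries : ∑' n, coh β n / Real.sqrt n.factorial * conj α ^ n
      = Real.exp (-‖β‖ ^ 2 / 2) * Complex.exp (conj α * β) := by
    rw [Complex.exp_eq_exp_ℂ, NormedSpace.exp_eq_tsum_div, ← tsum_mul_left]
    congr 1 with n
    simp only [coh_apply, cohFun, Complex.ofReal_div]
    rw [mul_pow, ← hsq]
    field_simp
  rw [inner_coh_left, hseries, Complex.conj_mul', Complex.conj_mul']
  push_cast
  rw [← Complex.exp_add, ← Complex.exp_add]
  ring_nf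

theorem topologicalClosure_span_coh :
    (Submodule.span ℂ (Set.range coh)).topologicalClosure = ⊤ := by
  rw [Submodule.topologicalClosure_eq_top_iff, Submodule.eq_bot_iff]
  intro x hx
  have hcoeff := eq_zero_of_tsum_mul_pow_eq_zero (c := fun n => x n / Real.sqrt n.factorial)
    (C := ‖x‖) (fun n => ?_) (fun z => ?_)
  · ext n
    simpa [Nat.factorial_ne_zero] using congr_fun hcoeff n
  · rw [norm_div, Complex.norm_real, Real.norm_of_nonneg (Real.sqrt_nonneg _)]
    exact (div_le_self (norm_nonneg _) (Real.one_le_sqrt.2 (mod_cast n.factorial_pos))).trans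
      (lp.norm_apply_le_norm two_ne_zero x n)
  · -- the generating function at `z` is, up to a nonzero factor, `⟪coh (conj z), x⟫`
    have h := (Submodule.mem_orthogonal _ x).1 hx _ (Submodule.subset_span ⟨conj z, rfl⟩)
    rw [inner_coh_left, Complex.conj_conj] at h
    exact (mul_eq_zero.1 h).resolve_left (by exact_mod_cast (Real.exp_pos _).ne')

theorem tmul_apply (ψ χ : lp (fun _ : ℕ => ℂ) 2) (q : ℕ × ℕ) : tmul ψ χ q = ψ q.1 * χ q.2 := rfl

theorem inner_tmul (ψ χ ψ' χ' : lp (fun _ : ℕ => ℂ) 2) :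
    ⟪tmul ψ χ, tmul ψ' χ'⟫_ℂ = ⟪ψ, ψ'⟫_ℂ * ⟪χ, χ'⟫_ℂ := by
  have hsum (f g : lp (fun _ : ℕ => ℂ) 2) : Summable fun n => ‖⟪f n, g n⟫_ℂ‖ :=
    (lp.summable_mul (by rw [Real.holderConjugate_iff]; norm_num) f g).congr fun n => by
      simp [mul_comm]
  rw [lp.inner_eq_tsum, lp.inner_eq_tsum, lp.inner_eq_tsum,
    tsum_mul_tsum_of_summable_norm (hsum ψ ψ') (hsum χ χ')]
  congr 1 with q
  simp only [RCLike.inner_apply, tmul_apply, map_mul]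
  ring

theorem norm_tmul (ψ χ : lp (fun _ : ℕ => ℂ) 2) : ‖tmul ψ χ‖ = ‖ψ‖ * ‖χ‖ := by
  rw [@norm_eq_sqrt_re_inner ℂ, inner_tmul, inner_self_eq_norm_sq_to_K,
    inner_self_eq_norm_sq_to_K, ← mul_pow]
  norm_cast
  exact Real.sqrt_sq (by positivity)

noncomputable def tmulL :
    lp (fun _ : ℕ => ℂ) 2 →L[ℂ] lp (fun _ : ℕ => ℂ) 2 →L[ℂ] lp (fun _ : ℕ × ℕ => ℂ) 2 :=
  LinearMap.mkContinuous₂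
    (LinearMap.mk₂ ℂ tmul
      (fun _ _ _ => lp.ext <| funext fun _ => add_mul _ _ _)
      (fun _ _ _ => lp.ext <| funext fun _ => mul_assoc _ _ _)
      (fun _ _ _ => lp.ext <| funext fun _ => mul_add _ _ _)
      (fun _ _ _ => lp.ext <| funext fun _ => mul_left_comm _ _ _))
    1 fun ψ χ => by simp [norm_tmul]

theorem tmul_single (n m : ℕ) (a b : ℂ) :
    tmul (lp.single 2 n a) (lp.single 2 m b) = lp.single 2 (n, m) (a * b) := by
  ext ⟨k, l⟩
  simp only [tmul_apply, lp.single_apply, Pi.single_apply, Prod.mk.injEq]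
  split_ifs <;> simp_all

theorem tmul_mem_topologicalClosure_span_image2 {s t : Set (lp (fun _ : ℕ => ℂ) 2)}
    (hs : (Submodule.span ℂ s).topologicalClosure = ⊤)
    (ht : (Submodule.span ℂ t).topologicalClosure = ⊤) (ψ χ : lp (fun _ : ℕ => ℂ) 2) :
    tmul ψ χ ∈ (Submodule.span ℂ (Set.image2 tmul s t)).topologicalClosure := by
  have mem_closure {u : Set (lp (fun _ : ℕ => ℂ) 2)}
      (hu : (Submodule.span ℂ u).topologicalClosure = ⊤) (φ) :
      φ ∈ closure (Submodule.span ℂ u : Set (lp (fun _ : ℕ => ℂ) 2)) := by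
    rw [← Submodule.topologicalClosure_coe, hu]
    trivial
  have hspan : Submodule.map₂ (ContinuousLinearMap.toLinearMap₁₂ tmulL) (Submodule.span ℂ s)
      (Submodule.span ℂ t) = Submodule.span ℂ (Set.image2 tmul s t) :=
    Submodule.map₂_span_span ℂ _ s t
  rw [← SetLike.mem_coe, Submodule.topologicalClosure_coe, ← hspan]
  exact map_mem_closure₂ tmulL.continuous₂ (mem_closure hs ψ) (mem_closure ht χ)
    fun a ha b hb => Submodule.apply_mem_map₂ _ ha hb

theorem topologicalClosure_span_image2_tmul {s t : Set (lp (fun _ : ℕ => ℂ) 2)}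
    (hs : (Submodule.span ℂ s).topologicalClosure = ⊤)
    (ht : (Submodule.span ℂ t).topologicalClosure = ⊤) :
    (Submodule.span ℂ (Set.image2 tmul s t)).topologicalClosure = ⊤ := by
  let b : HilbertBasis (ℕ × ℕ) ℂ (lp (fun _ : ℕ × ℕ => ℂ) 2) := default
  have hb (q : ℕ × ℕ) : b q = tmul (lp.single 2 q.1 1) (lp.single 2 q.2 1) := by
    rw [tmul_single, mul_one, ← b.repr_symm_single]
    rfl
  rw [eq_top_iff, ← b.dense_span]
  refine Submodule.topologicalClosure_minimal _ (Submodule.span_le.2 ?_)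
    (Submodule.isClosed_topologicalClosure _)
  rintro _ ⟨q, rfl⟩
  rw [hb]
  exact tmul_mem_topologicalClosure_span_image2 hs ht _ _

noncomputable def coh₂ (p : WithLp 2 (ℂ × ℂ)) : lp (fun _ : ℕ × ℕ => ℂ) 2 :=
  tmul (coh p.fst) (coh p.snd)

theorem inner_coh₂ (p q : WithLp 2 (ℂ × ℂ)) :
    ⟪coh₂ p, coh₂ q⟫_ℂ = Complex.exp (⟪p, q⟫_ℂ - (⟪p, p⟫_ℂ + ⟪q, q⟫_ℂ) / 2) := by
  simp only [coh₂, inner_tmul, inner_coh, ← Complex.exp_add, WithLp.prod_inner_apply,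
    RCLike.inner_apply]
  congr 1
  simp only [WithLp.fst, WithLp.snd]
  ring

theorem topologicalClosure_span_coh₂ :
    (Submodule.span ℂ (Set.range coh₂)).topologicalClosure = ⊤ := by
  have hrange : Set.range coh₂ = Set.image2 tmul (Set.range coh) (Set.range coh) := by
    rw [Set.image2_range, ← (WithLp.equiv 2 (ℂ × ℂ)).symm.surjective.range_comp]
    rfl
  rw [hrange]
  exact topologicalClosure_span_image2_tmul topologicalClosure_span_coh topologicalClosure_span_coh

theorem exists_linearIsometryEquiv_coh₂_eq (U : WithLp 2 (ℂ × ℂ) ≃ₗᵢ[ℂ] WithLp 2 (ℂ × ℂ)) :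
    ∃ B : lp (fun _ : ℕ × ℕ => ℂ) 2 ≃ₗᵢ[ℂ] lp (fun _ : ℕ × ℕ => ℂ) 2,
      ∀ p, B (coh₂ p) = coh₂ (U p) :=
  exists_linearIsometryEquiv_of_inner_eq (w := coh₂ ∘ U)
    (fun p q => by simp only [Function.comp_apply, inner_coh₂, U.inner_map_map])
    topologicalClosure_span_coh₂
    (by rw [U.surjective.range_comp]; exact topologicalClosure_span_coh₂)

noncomputable def beamSplitter (θ : ℝ) : WithLp 2 (ℂ × ℂ) ≃ₗᵢ[ℂ] WithLp 2 (ℂ × ℂ) :=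
  LinearIsometry.toLinearIsometryEquiv (LinearMap.isometryOfInner
    { toFun := fun p => WithLp.toLp 2
        (p.fst * Real.cos θ + Complex.I * p.snd * Real.sin θ,
          p.snd * Real.cos θ + Complex.I * p.fst * Real.sin θ)
      map_add' := fun p q => by
        simp only [WithLp.add_fst, WithLp.add_snd, ← WithLp.toLp_add, Prod.mk_add_mk]
        ring_nf
      map_smul' := fun a p => by
        simp only [WithLp.smul_fst, WithLp.smul_snd, smul_eq_mul, RingHom.id_apply,
          ← WithLp.toLp_smul, Prod.smul_mk]
        ring_nf }
    fun p q => by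
      have hcs : (Real.cos θ : ℂ) ^ 2 + (Real.sin θ : ℂ) ^ 2 = 1 :=
        mod_cast Real.cos_sq_add_sin_sq θ
      simp only [WithLp.prod_inner_apply, RCLike.inner_apply, LinearMap.coe_mk, AddHom.coe_mk,
        WithLp.fst, WithLp.snd, map_add, map_mul, Complex.conj_ofReal, Complex.conj_I]
      linear_combination (q.ofLp.1 * conj p.ofLp.1 + q.ofLp.2 * conj p.ofLp.2) *
        (hcs - (Real.sin θ : ℂ) ^ 2 * Complex.I_sq)) rfl

theorem beamSplitter_apply (θ : ℝ) (α β : ℂ) :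
    beamSplitter θ (WithLp.toLp 2 (α, β)) = WithLp.toLp 2
      (α * Real.cos θ + Complex.I * β * Real.sin θ, β * Real.cos θ + Complex.I * α * Real.sin θ) :=
  rfl

/-- existence of the beam splitter with transmissivity `cos²θ`. -/
theorem exists_beam_splitter (θ : ℝ) :
    ∃ B : lp (fun _ : ℕ × ℕ => ℂ) 2 ≃ₗᵢ[ℂ] lp (fun _ : ℕ × ℕ => ℂ) 2,
      ∀ α β : ℂ, B (tmul (coh α) (coh β))
        = tmul (coh (α * (Real.cos θ : ℂ) + Complex.I * β * (Real.sin θ : ℂ)))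
               (coh (β * (Real.cos θ : ℂ) + Complex.I * α * (Real.sin θ : ℂ))) := by
  obtain ⟨B, hB⟩ := exists_linearIsometryEquiv_coh₂_eq (beamSplitter θ)
  exact ⟨B, fun α β => by simpa [coh₂, beamSplitter_apply] using hB (WithLp.toLp 2 (α, β))⟩
end

section
/- (Theorem 1) Let α, β ∈ ℂ with α ≠ 0 and β ≠ 0, let 𝔻 be a two-mode displacement operator with parameters (−α/2, −β/2), and let φ ∈ ℓ²(ℕ×ℕ, ℂ) with ‖φ‖ = 1 satisfy: (i) Ω₁ φ = φ; (ii) Ω₂ φ = φ; (iii) (𝔻 φ)(n,m) = 0 for all (n,m) with n+m odd (i.e. φ is fixed by the displaced even-parity projection Ω₃ = 𝔻⁻¹ ∘ P_even ∘ 𝔻). Then there exists c ∈ ℂ with |c| = 1 such that φ = c • ψ^ECS_{α,β}, where ψ^ECS_{α,β} = (2(1 + exp(−(|α|²+|β|²)/2)))^{−1/2} • (coh α ⊠ coh 0 + coh 0 ⊠ coh β). -/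
/-!
Condition (i) makes `φ` vanish off the two coordinate axes, and condition (ii) writes
`φ (n, m) = u n * coh β m + coh α n * v m`. As every coefficient of a coherent state with nonzero
amplitude is nonzero, together they force `φ = A • coh α ⊠ coh 0 + B • coh 0 ⊠ coh β`. The
displacement sends these two product states to `coh (α/2) ⊠ coh (-β/2)` and
`coh (-α/2) ⊠ coh (β/2)`, whose `(1, 0)` coefficients are opposite and nonzero, so the parity
condition (iii) at `(1, 0)` gives `A = B`. Finally `‖φ‖ = 1` fixes `|A|`, via the overlap
`⟪coh α, coh 0⟫ ⟪coh 0, coh β⟫ = exp (-(|α|² + |β|²) / 2)`.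
-/

open scoped ComplexConjugate ENNReal

def IsTwoModeDisplacement
    (𝔻 : lp (fun _ : ℕ × ℕ => ℂ) 2 ≃ₗᵢ[ℂ] lp (fun _ : ℕ × ℕ => ℂ) 2) (γ δ : ℂ) : Prop :=
  ∀ β β' : ℂ, 𝔻 (tmul (coh β) (coh β')) =
    Complex.exp ((γ * conj β - conj γ * β) / 2 + (δ * conj β' - conj δ * β') / 2) •
      tmul (coh (γ + β)) (coh (δ + β'))

open scoped InnerProductSpace lp

lemma cohFun_zero_apply (n : ℕ) : cohFun 0 n = if n = 0 then 1 else 0 := by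
  rcases n with _ | _ <;> simp [cohFun]

lemma cohFun_ne_zero {γ : ℂ} (hγ : γ ≠ 0) (n : ℕ) : cohFun γ n ≠ 0 :=
  mul_ne_zero (by norm_cast; positivity) (pow_ne_zero n hγ)

lemma inner_coh_coh (a b : ℂ) :
    ⟪coh a, coh b⟫_ℂ = Complex.exp (-(‖a‖ ^ 2 + ‖b‖ ^ 2) / 2 + conj a * b) := by
  have hterm : ∀ n : ℕ, ⟪coh a n, coh b n⟫_ℂ =
      (Real.exp (-‖a‖ ^ 2 / 2) * Real.exp (-‖b‖ ^ 2 / 2) : ℝ) *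
        ((conj a * b) ^ n / n.factorial) := fun n => by
    have hfac : (Real.sqrt n.factorial : ℂ) ^ 2 = n.factorial := by
      rw [← Complex.ofReal_pow, Real.sq_sqrt (Nat.cast_nonneg _), Complex.ofReal_natCast]
    simp only [RCLike.inner_apply, coh, cohFun, map_mul, map_pow, Complex.conj_ofReal]
    push_cast
    field_simp
    rw [hfac, mul_pow, mul_comm]
  rw [lp.inner_eq_tsum, tsum_congr hterm, tsum_mul_left, ← congrFun NormedSpace.exp_eq_tsum_div,
    ← Complex.exp_eq_exp_ℂ]
  push_cast
  rw [← Complex.exp_add, ← Complex.exp_add]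
  ring_nf

lemma tmul_apply_s12 (ψ χ : ℓ²(ℕ, ℂ)) (n m : ℕ) : tmul ψ χ (n, m) = ψ n * χ m := rfl

lemma inner_tmul_s12 (a b c d : ℓ²(ℕ, ℂ)) :
    ⟪tmul a b, tmul c d⟫_ℂ = ⟪a, c⟫_ℂ * ⟪b, d⟫_ℂ := by
  have hprod := tsum_mul_tsum_of_summable_norm (f := fun n => ⟪a n, c n⟫_ℂ)
    (g := fun m => ⟪b m, d m⟫_ℂ) (summable_norm_iff.2 (lp.summable_inner a c))
    (summable_norm_iff.2 (lp.summable_inner b d))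
  rw [lp.inner_eq_tsum, lp.inner_eq_tsum, lp.inner_eq_tsum, hprod]
  refine tsum_congr fun q => ?_
  simp only [RCLike.inner_apply, tmul, map_mul]
  ring

lemma norm_tmul_coh_zero_add_tmul_zero_coh (α β : ℂ) :
    ‖tmul (coh α) (coh 0) + tmul (coh 0) (coh β)‖ =
      Real.sqrt (2 * (1 + Real.exp (-(‖α‖ ^ 2 + ‖β‖ ^ 2) / 2))) := by
  have hself : ∀ a : ℂ, ⟪coh a, coh a⟫_ℂ = 1 := fun a => by
    rw [inner_coh_coh, Complex.conj_mul']
    ring_nf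
    exact Complex.exp_zero
  have hcross : ⟪coh α, coh 0⟫_ℂ * ⟪coh 0, coh β⟫_ℂ = Real.exp (-(‖α‖ ^ 2 + ‖β‖ ^ 2) / 2) ∧
      ⟪coh 0, coh α⟫_ℂ * ⟪coh β, coh 0⟫_ℂ = Real.exp (-(‖α‖ ^ 2 + ‖β‖ ^ 2) / 2) := by
    constructor <;>
    · simp only [inner_coh_coh, ← Complex.exp_add, map_zero, norm_zero]
      push_cast
      ring_nf
  rw [norm_eq_sqrt_re_inner (𝕜 := ℂ)]
  congr 1
  simp only [inner_add_left, inner_add_right, inner_tmul_s12, hself]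
  rw [hcross.1, hcross.2]
  simp only [mul_one, RCLike.re_to_complex, Complex.add_re, Complex.one_re, Complex.ofReal_re]
  ring

lemma exists_eq_const_mul_of_mul_add_mul_eq_zero {ψ χ u v : ℕ → ℂ} (hψ : ψ 1 ≠ 0)
    (hχ : χ 1 ≠ 0) (h : ∀ n m, n ≠ 0 → m ≠ 0 → u n * χ m + ψ n * v m = 0) :
    ∃ c : ℂ, (∀ n, n ≠ 0 → u n = c * ψ n) ∧ ∀ m, m ≠ 0 → v m = -(c * χ m) := by
  have hu : ∀ n, n ≠ 0 → u n = -(v 1 / χ 1) * ψ n := fun n hn => by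
    field_simp
    linear_combination h n 1 hn one_ne_zero
  refine ⟨-(v 1 / χ 1), hu, fun m hm => mul_left_cancel₀ hψ ?_⟩
  linear_combination h 1 m one_ne_zero hm - χ m * hu 1 one_ne_zero

lemma eq_smul_tmul_coh_zero_add_smul_tmul_coh_zero {ψ χ : ℓ²(ℕ, ℂ)} (hψ : ψ 1 ≠ 0)
    (hχ : χ 1 ≠ 0) {φ : ℓ²(ℕ × ℕ, ℂ)} {u v : ℕ → ℂ}
    (hsplit : ∀ n m, φ (n, m) = u n * χ m + ψ n * v m)
    (hvanish : ∀ n m, n ≠ 0 → m ≠ 0 → φ (n, m) = 0) :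
    ∃ A B : ℂ, φ = A • tmul ψ (coh 0) + B • tmul (coh 0) χ := by
  obtain ⟨c, hu, hv⟩ := exists_eq_const_mul_of_mul_add_mul_eq_zero hψ hχ
    fun n m hn hm => (hsplit n m).symm.trans (hvanish n m hn hm)
  refine ⟨c * χ 0 + v 0, u 0 - c * ψ 0, lp.ext (funext fun ⟨n, m⟩ => ?_)⟩
  simp only [lp.coeFn_add, lp.coeFn_smul, Pi.add_apply, Pi.smul_apply, smul_eq_mul, tmul_apply_s12,
    coh, cohFun_zero_apply]
  rcases eq_or_ne n 0 with rfl | hn <;> rcases eq_or_ne m 0 with rfl | hm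
  · simp only [hsplit, if_true]
    ring
  · simp only [hsplit, hv m hm, if_true, if_neg hm]
    ring
  · simp only [hsplit, hu n hn, if_true, if_neg hn]
    ring
  · simp only [hvanish n m hn hm, if_neg hn, if_neg hm]
    ring

namespace IsTwoModeDisplacement

variable {𝔻 : ℓ²(ℕ × ℕ, ℂ) ≃ₗᵢ[ℂ] ℓ²(ℕ × ℕ, ℂ)} {α β : ℂ}

lemma apply_tmul_coh_coh_zero (h𝔻 : IsTwoModeDisplacement 𝔻 (-α / 2) (-β / 2)) :
    𝔻 (tmul (coh α) (coh 0)) = tmul (coh (α / 2)) (coh (-(β / 2))) := by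
  rw [h𝔻, show -α / 2 + α = α / 2 by ring, show -β / 2 + 0 = -(β / 2) by ring]
  convert one_smul ℂ _
  simp only [map_zero, map_div₀, map_neg, map_ofNat]
  ring_nf
  exact Complex.exp_zero

lemma apply_tmul_coh_zero_coh (h𝔻 : IsTwoModeDisplacement 𝔻 (-α / 2) (-β / 2)) :
    𝔻 (tmul (coh 0) (coh β)) = tmul (coh (-(α / 2))) (coh (β / 2)) := by
  rw [h𝔻, show -β / 2 + β = β / 2 by ring, show -α / 2 + 0 = -(α / 2) by ring]
  convert one_smul ℂ _
  simp only [map_zero, map_div₀, map_neg, map_ofNat]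
  ring_nf
  exact Complex.exp_zero

end IsTwoModeDisplacement

lemma tmul_coh_apply_one_zero (a b : ℂ) :
    tmul (coh a) (coh b) (1, 0) = Real.exp (-(‖a‖ ^ 2 + ‖b‖ ^ 2) / 2) * a := by
  simp only [tmul_apply_s12, coh, cohFun, pow_one, pow_zero, mul_one, Nat.factorial, Nat.cast_one,
    Real.sqrt_one, div_one]
  rw [mul_right_comm, ← Complex.ofReal_mul, ← Real.exp_add]
  ring_nf

lemma eq_of_smul_tmul_coh_add_smul_tmul_coh_neg_apply_one_zero {a b A B : ℂ} (ha : a ≠ 0)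
    (h : (A • tmul (coh a) (coh (-b)) + B • tmul (coh (-a)) (coh b)) (1, 0) = 0) : A = B := by
  simp only [lp.coeFn_add, lp.coeFn_smul, Pi.add_apply, Pi.smul_apply, smul_eq_mul,
    tmul_coh_apply_one_zero, norm_neg] at h
  have hexp : (Real.exp (-(‖a‖ ^ 2 + ‖b‖ ^ 2) / 2) : ℂ) * a ≠ 0 :=
    mul_ne_zero (Complex.ofReal_ne_zero.2 (Real.exp_ne_zero _)) ha
  exact sub_eq_zero.1 (mul_right_cancel₀ hexp (by linear_combination h))

lemma exists_norm_eq_one_eq_smul_inv_norm_smul {𝕜 E : Type*} [RCLike 𝕜] [NormedAddCommGroup E]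
    [NormedSpace 𝕜 E] {φ v : E} {A : 𝕜} (hφ : φ = A • v) (hnorm : ‖φ‖ = 1) :
    ∃ c : 𝕜, ‖c‖ = 1 ∧ φ = c • ((‖v‖ : 𝕜)⁻¹ • v) := by
  have hv : (‖v‖ : 𝕜) ≠ 0 := by
    rintro hv
    rw [hφ, norm_smul, RCLike.ofReal_eq_zero.1 hv, mul_zero] at hnorm
    exact zero_ne_one hnorm
  refine ⟨A * ‖v‖, ?_, ?_⟩
  · rw [norm_mul, RCLike.norm_ofReal, abs_norm, ← norm_smul, ← hφ, hnorm]
  · rw [smul_smul, mul_inv_cancel_right₀ hv, hφ]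

/-- Theorem 1: a unit vector passing all three measurement settings of the
verification protocol equals the entangled coherent state `ψ^ECS_{α,β}` up to a phase. -/
theorem ecs_verification (α β : ℂ) (hα : α ≠ 0) (hβ : β ≠ 0)
    (𝔻 : lp (fun _ : ℕ × ℕ => ℂ) 2 ≃ₗᵢ[ℂ] lp (fun _ : ℕ × ℕ => ℂ) 2)
    (h𝔻 : IsTwoModeDisplacement 𝔻 (-α / 2) (-β / 2))
    (Ω₁ Ω₂ : lp (fun _ : ℕ × ℕ => ℂ) 2 →L[ℂ] lp (fun _ : ℕ × ℕ => ℂ) 2)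
    (hΩ₁ : ∀ (φ : lp (fun _ : ℕ × ℕ => ℂ) 2) (n m : ℕ),
      (Ω₁ φ) (n, m) = if n = 0 ∨ m = 0 then φ (n, m) else 0)
    (hΩ₂ : ∀ (φ : lp (fun _ : ℕ × ℕ => ℂ) 2) (n m : ℕ),
      (Ω₂ φ) (n, m)
        = coh β m * (∑' k : ℕ, conj (coh β k) * φ (n, k))
        + coh α n * (∑' k : ℕ, conj (coh α k) * φ (k, m))
        - coh α n * coh β m * (∑' k : ℕ, ∑' l : ℕ, conj (coh α k) * conj (coh β l) * φ (k, l)))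
    (φ : lp (fun _ : ℕ × ℕ => ℂ) 2) (hnorm : ‖φ‖ = 1)
    (h1 : Ω₁ φ = φ) (h2 : Ω₂ φ = φ)
    (h3 : ∀ n m : ℕ, Odd (n + m) → (𝔻 φ) (n, m) = 0) :
    ∃ c : ℂ, ‖c‖ = 1 ∧
      φ = c • (((Real.sqrt (2 * (1 + Real.exp (-(‖α‖ ^ 2 + ‖β‖ ^ 2) / 2))))⁻¹ : ℂ) •
        (tmul (coh α) (coh 0) + tmul (coh 0) (coh β))) := by
  have hvanish : ∀ n m, n ≠ 0 → m ≠ 0 → φ (n, m) = 0 := fun n m hn hm => by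
    rw [← h1, hΩ₁, if_neg (not_or.2 ⟨hn, hm⟩)]
  have hsplit : ∀ n m, φ (n, m) = (∑' k, conj (coh β k) * φ (n, k)) * coh β m + coh α n *
      (∑' k, conj (coh α k) * φ (k, m) -
        coh β m * ∑' k, ∑' l, conj (coh α k) * conj (coh β l) * φ (k, l)) := fun n m => by
    rw [← congrArg (· (n, m)) h2, hΩ₂]
    ring
  obtain ⟨A, B, hφ⟩ := eq_smul_tmul_coh_zero_add_smul_tmul_coh_zero (cohFun_ne_zero hα 1)
    (cohFun_ne_zero hβ 1) hsplit hvanish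
  have hDφ : 𝔻 φ = A • tmul (coh (α / 2)) (coh (-(β / 2))) +
      B • tmul (coh (-(α / 2))) (coh (β / 2)) := by
    rw [hφ, map_add, map_smul, map_smul, h𝔻.apply_tmul_coh_coh_zero, h𝔻.apply_tmul_coh_zero_coh]
  have hAB : A = B := eq_of_smul_tmul_coh_add_smul_tmul_coh_neg_apply_one_zero
    (div_ne_zero hα two_ne_zero) (hDφ ▸ h3 1 0 odd_one)
  obtain ⟨c, hc, hφc⟩ := exists_norm_eq_one_eq_smul_inv_norm_smul
    (A := B) (v := tmul (coh α) (coh 0) + tmul (coh 0) (coh β)) (by rw [hφ, hAB, smul_add]) hnorm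
  rw [norm_tmul_coh_zero_add_tmul_zero_coh] at hφc
  exact ⟨c, hc, hφc⟩
end

section
/- (Lemma 2) Let J be a type, let α, β, γ ∈ ℂ be all nonzero, and let φ ∈ ℓ²(ℕ×ℕ×ℕ×J, ℂ). Define the bounded operators Θ₁ = (I ⊗ P₀ + P_α ⊗ I − P_α ⊗ P₀) acting on indices (1,2), Θ₂ = (I ⊗ P_β + P₀ ⊗ I − P₀ ⊗ P_β) acting on indices (1,2), Θ₃ = (I ⊗ P₀ + P_β ⊗ I − P_β ⊗ P₀) acting on indices (2,3), and Θ₄ = (I ⊗ P_γ + P₀ ⊗ I − P₀ ⊗ P_γ) acting on indices (2,3), each acting as the identity on all remaining indices. If Θᵢ φ = φ for i = 1, 2, 3, 4, then there exist ψ₁, ψ₂ ∈ ℓ²(J, ℂ) such that φ(n,m,p,j) = (coh α) n · (coh β) m · (coh γ) p · ψ₁ j + (coh 0) n · (coh 0) m · (coh 0) p · ψ₂ j for all n, m, p, j. -/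
open scoped ComplexConjugate ENNReal

/-!
Since `coh 0` is the vacuum `δ₀`, each fixed-point equation says that, wherever the index
carrying the vacuum factor is nonzero, `φ` is a multiple of a coherent state in the other index:
of `coh α` in `n` when `m ≠ 0` (`Θ₁`), of `coh β` in `m` when `n ≠ 0` (`Θ₂`) or `p ≠ 0` (`Θ₃`),
of `coh γ` in `p` when `m ≠ 0` (`Θ₄`). Chaining these proportionalities through the index
`(1, 1, 1)` gives `φ (n, m, p, ·) = (coh α) n (coh β) m (coh γ) p • ψ₁` off the origin, and the
value at the origin is absorbed into `ψ₂`.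
-/

open Function

theorem Memℓp.comp_injective {α β E : Type*} [NormedAddCommGroup E] {p : ℝ≥0∞} {f : β → E}
    (hf : Memℓp f p) {g : α → β} (hg : Injective g) : Memℓp (f ∘ g) p := by
  rcases p.trichotomy with rfl | rfl | hp
  · exact memℓp_zero (hf.finite_dsupport.preimage hg.injOn)
  · exact memℓp_infty (hf.bddAbove.mono (Set.range_comp_subset_range g fun b => ‖f b‖))
  · exact memℓp_gen ((hf.summable hp).comp_injective hg)

noncomputable def lp.compInjective {α β E : Type*} [NormedAddCommGroup E] {p : ℝ≥0∞}
    (φ : lp (fun _ : β => E) p) {g : α → β} (hg : Injective g) : lp (fun _ : α => E) p :=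
  ⟨φ ∘ g, (lp.memℓp φ).comp_injective hg⟩

@[simp]
theorem lp.compInjective_apply {α β E : Type*} [NormedAddCommGroup E] {p : ℝ≥0∞}
    (φ : lp (fun _ : β => E) p) {g : α → β} (hg : Injective g) (a : α) :
    lp.compInjective φ hg a = φ (g a) :=
  rfl

theorem cohFun_zero_apply_of_ne_zero {n : ℕ} (hn : n ≠ 0) : cohFun 0 n = 0 := by
  simp [cohFun, zero_pow hn]

@[simp]
theorem cohFun_zero_zero : cohFun 0 0 = 1 := by
  simp [cohFun]

theorem cohFun_ne_zero_s17 {α : ℂ} (hα : α ≠ 0) (n : ℕ) : cohFun α n ≠ 0 := by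
  have : (0 : ℝ) < Real.exp (-‖α‖ ^ 2 / 2) / Real.sqrt (Nat.factorial n) := by positivity
  exact mul_ne_zero (Complex.ofReal_ne_zero.mpr this.ne') (pow_ne_zero n hα)

theorem cohFun_zero_mul_mul_eq_zero {n m p : ℕ} (h : n ≠ 0 ∨ m ≠ 0 ∨ p ≠ 0) :
    cohFun 0 n * cohFun 0 m * cohFun 0 p = 0 := by
  rcases h with h | h | h <;> simp [cohFun_zero_apply_of_ne_zero h]

theorem mul_eq_mul_of_forall_eq_mul_const {ι R : Type*} [CommSemigroup R] {f c : ι → R} {s : R}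
    (h : ∀ k, f k = c k * s) (k l : ι) : c l * f k = c k * f l := by
  rw [h k, h l, mul_left_comm]

theorem eq_mul_mul_mul_of_proportional {K : Type*} [Field K] {a b c : ℕ → K}
    (ha : a 1 ≠ 0) (hb : b 1 ≠ 0) (hc : c 1 ≠ 0) {F : ℕ → ℕ → ℕ → K}
    (hA : ∀ n m p, m ≠ 0 → a 1 * F n m p = a n * F 1 m p)
    (hB : ∀ n m p, n ≠ 0 ∨ p ≠ 0 → b 1 * F n m p = b m * F n 1 p)
    (hC : ∀ n m p, m ≠ 0 → c 1 * F n m p = c p * F n m 1)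
    {n m p : ℕ} (h : n ≠ 0 ∨ m ≠ 0 ∨ p ≠ 0) :
    F n m p = a n * b m * c p * (F 1 1 1 / (a 1 * b 1 * c 1)) := by
  have of_middle_ne_zero : ∀ n m p, m ≠ 0 →
      F n m p = a n * b m * c p * (F 1 1 1 / (a 1 * b 1 * c 1)) := by
    intro n m p hm
    have e₁ := hC n m p hm
    have e₂ := hB n m 1 (Or.inr one_ne_zero)
    have e₃ := hA n 1 1 one_ne_zero
    field_simp
    linear_combination a 1 * b 1 * e₁ + a 1 * c p * e₂ + b m * c p * e₃
  rcases eq_or_ne m 0 with rfl | hm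
  · have e := hB n 0 p (by tauto)
    rw [of_middle_ne_zero n 1 p one_ne_zero] at e
    field_simp at e ⊢
    linear_combination e
  · exact of_middle_ne_zero n m p hm

theorem exists_eq_product_add_vacuum_of_proportional {J : Type*}
    (φ : lp (fun _ : ℕ × ℕ × ℕ × J => ℂ) 2) {a b c : ℕ → ℂ}
    (ha : a 1 ≠ 0) (hb : b 1 ≠ 0) (hc : c 1 ≠ 0)
    (hA : ∀ j n m p, m ≠ 0 → a 1 * φ (n, m, p, j) = a n * φ (1, m, p, j))
    (hB : ∀ j n m p, n ≠ 0 ∨ p ≠ 0 → b 1 * φ (n, m, p, j) = b m * φ (n, 1, p, j))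
    (hC : ∀ j n m p, m ≠ 0 → c 1 * φ (n, m, p, j) = c p * φ (n, m, 1, j)) :
    ∃ ψ₁ ψ₂ : lp (fun _ : J => ℂ) 2, ∀ (n m p : ℕ) (j : J),
      φ (n, m, p, j) = a n * b m * c p * ψ₁ j + cohFun 0 n * cohFun 0 m * cohFun 0 p * ψ₂ j := by
  have slice_injective : ∀ n m p : ℕ, Injective fun j : J => (n, m, p, j) :=
    fun n m p _ _ h => by simpa using h
  set ψ₁ := (a 1 * b 1 * c 1)⁻¹ • lp.compInjective φ (slice_injective 1 1 1)
  refine ⟨ψ₁, lp.compInjective φ (slice_injective 0 0 0) - (a 0 * b 0 * c 0) • ψ₁,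
    fun n m p j => ?_⟩
  by_cases h : n ≠ 0 ∨ m ≠ 0 ∨ p ≠ 0
  · rw [cohFun_zero_mul_mul_eq_zero h, zero_mul, add_zero,
      eq_mul_mul_mul_of_proportional ha hb hc (hA j) (hB j) (hC j) h]
    simp [ψ₁, div_eq_inv_mul]
  · obtain ⟨rfl, rfl, rfl⟩ : n = 0 ∧ m = 0 ∧ p = 0 := by tauto
    simp only [lp.coeFn_sub, lp.coeFn_smul, Pi.sub_apply, Pi.smul_apply, smul_eq_mul,
      lp.compInjective_apply, cohFun_zero_zero]
    ring

/-- Lemma 2: a state of `ℓ²(ℕ×ℕ×ℕ×J, ℂ)` fixed by the four measurement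
operators `Θ₁, Θ₂, Θ₃, Θ₄` is a superposition
`coh α ⊗ coh β ⊗ coh γ ⊗ ψ₁ + coh 0 ⊗ coh 0 ⊗ coh 0 ⊗ ψ₂`. -/
theorem lemma2_three_mode_with_ancilla (J : Type*) (α β γ : ℂ)
    (hα : α ≠ 0) (hβ : β ≠ 0) (hγ : γ ≠ 0)
    (φ : lp (fun _ : ℕ × ℕ × ℕ × J => ℂ) 2)
    (Θ₁ Θ₂ Θ₃ Θ₄ : lp (fun _ : ℕ × ℕ × ℕ × J => ℂ) 2 →L[ℂ] lp (fun _ : ℕ × ℕ × ℕ × J => ℂ) 2)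
    (hΘ₁ : ∀ (ψ : lp (fun _ : ℕ × ℕ × ℕ × J => ℂ) 2) (n m p : ℕ) (j : J),
      (Θ₁ ψ) (n, m, p, j)
        = cohFun 0 m * (∑' k : ℕ, conj (cohFun 0 k) * ψ (n, k, p, j))
        + cohFun α n * (∑' k : ℕ, conj (cohFun α k) * ψ (k, m, p, j))
        - cohFun α n * cohFun 0 m *
            (∑' k : ℕ, ∑' l : ℕ, conj (cohFun α k) * conj (cohFun 0 l) * ψ (k, l, p, j)))
    (hΘ₂ : ∀ (ψ : lp (fun _ : ℕ × ℕ × ℕ × J => ℂ) 2) (n m p : ℕ) (j : J),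
      (Θ₂ ψ) (n, m, p, j)
        = cohFun β m * (∑' k : ℕ, conj (cohFun β k) * ψ (n, k, p, j))
        + cohFun 0 n * (∑' k : ℕ, conj (cohFun 0 k) * ψ (k, m, p, j))
        - cohFun 0 n * cohFun β m *
            (∑' k : ℕ, ∑' l : ℕ, conj (cohFun 0 k) * conj (cohFun β l) * ψ (k, l, p, j)))
    (hΘ₃ : ∀ (ψ : lp (fun _ : ℕ × ℕ × ℕ × J => ℂ) 2) (n m p : ℕ) (j : J),
      (Θ₃ ψ) (n, m, p, j)
        = cohFun 0 p * (∑' k : ℕ, conj (cohFun 0 k) * ψ (n, m, k, j))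
        + cohFun β m * (∑' k : ℕ, conj (cohFun β k) * ψ (n, k, p, j))
        - cohFun β m * cohFun 0 p *
            (∑' k : ℕ, ∑' l : ℕ, conj (cohFun β k) * conj (cohFun 0 l) * ψ (n, k, l, j)))
    (hΘ₄ : ∀ (ψ : lp (fun _ : ℕ × ℕ × ℕ × J => ℂ) 2) (n m p : ℕ) (j : J),
      (Θ₄ ψ) (n, m, p, j)
        = cohFun γ p * (∑' k : ℕ, conj (cohFun γ k) * ψ (n, m, k, j))
        + cohFun 0 m * (∑' k : ℕ, conj (cohFun 0 k) * ψ (n, k, p, j))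
        - cohFun 0 m * cohFun γ p *
            (∑' k : ℕ, ∑' l : ℕ, conj (cohFun 0 k) * conj (cohFun γ l) * ψ (n, k, l, j)))
    (h1 : Θ₁ φ = φ) (h2 : Θ₂ φ = φ) (h3 : Θ₃ φ = φ) (h4 : Θ₄ φ = φ) :
    ∃ ψ₁ ψ₂ : lp (fun _ : J => ℂ) 2, ∀ (n m p : ℕ) (j : J),
      φ (n, m, p, j)
        = cohFun α n * cohFun β m * cohFun γ p * ψ₁ j
        + cohFun 0 n * cohFun 0 m * cohFun 0 p * ψ₂ j := by
  have hA : ∀ j n m p, m ≠ 0 → cohFun α 1 * φ (n, m, p, j) = cohFun α n * φ (1, m, p, j) :=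
    fun j n m p hm => mul_eq_mul_of_forall_eq_mul_const (c := cohFun α)
      (f := fun k => φ (k, m, p, j))
      (fun k => by simpa [h1, cohFun_zero_apply_of_ne_zero hm] using hΘ₁ φ k m p j) n 1
  have hB : ∀ j n m p, n ≠ 0 ∨ p ≠ 0 →
      cohFun β 1 * φ (n, m, p, j) = cohFun β m * φ (n, 1, p, j) := by
    rintro j n m p (hn | hp)
    · exact mul_eq_mul_of_forall_eq_mul_const (c := cohFun β) (f := fun k => φ (n, k, p, j))
        (fun k => by simpa [h2, cohFun_zero_apply_of_ne_zero hn] using hΘ₂ φ n k p j) m 1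
    · exact mul_eq_mul_of_forall_eq_mul_const (c := cohFun β) (f := fun k => φ (n, k, p, j))
        (fun k => by simpa [h3, cohFun_zero_apply_of_ne_zero hp] using hΘ₃ φ n k p j) m 1
  have hC : ∀ j n m p, m ≠ 0 → cohFun γ 1 * φ (n, m, p, j) = cohFun γ p * φ (n, m, 1, j) :=
    fun j n m p hm => mul_eq_mul_of_forall_eq_mul_const (c := cohFun γ)
      (f := fun k => φ (n, m, k, j))
      (fun k => by simpa [h4, cohFun_zero_apply_of_ne_zero hm] using hΘ₄ φ n m k j) p 1
  exact exists_eq_product_add_vacuum_of_proportional φ (cohFun_ne_zero_s17 hα 1) (cohFun_ne_zero_s17 hβ 1)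
    (cohFun_ne_zero_s17 hγ 1) hA hB hC
end
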